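/- arXiv:2604.16973 — 8 statements merged into one kernel-verified Lean document; each statement's English description precedes it below -/
import Mathlib

section
/- In a decomposition of an SD-envy-free assignment matrix, the probability that any fixed agent i envies any fixed agent i' is at most (n-1)/n. (Agent i envies agent i' in a deterministic assignment if i strictly prefers the object assigned to i' over her own object.) -/
/-- A doubly stochastic assignment matrix: nonnegative entries, each row and column sums to 1. -/
def DoublyStochastic (n : ℕ) (P : Fin n → Fin n → ℝ) : Prop :=
  (∀ i o, 0 ≤ P i o) ∧ (∀ i, ∑ o, P i o = 1) ∧ (∀ o, ∑ i, P i o = 1)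

/-- SD-envy-freeness: `rank i o` is the position of object `o` in agent `i`'s strict
preference (smaller = more preferred). For all agents `i, i'` and objects `o`, the mass agent
`i` gets on objects weakly preferred (by `i`) to `o` is at least the mass `i'` gets there. -/
def SDEF (n : ℕ) (rank : Fin n → Equiv.Perm (Fin n)) (P : Fin n → Fin n → ℝ) : Prop :=
  ∀ i i' o : Fin n,
    ∑ o' ∈ Finset.univ.filter (fun o' => rank i o' ≤ rank i o), P i' o' ≤
    ∑ o' ∈ Finset.univ.filter (fun o' => rank i o' ≤ rank i o), P i o'

/-- A decomposition of an assignment matrix: a probability distribution over deterministic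
assignments (permutations `σ`, where `σ i` is the object of agent `i`) whose marginals are `P`. -/
def IsDecomposition (n : ℕ) (P : Fin n → Fin n → ℝ) (w : Equiv.Perm (Fin n) → ℝ) : Prop :=
  (∀ σ, 0 ≤ w σ) ∧ (∑ σ, w σ = 1) ∧
  ∀ i o, ∑ σ ∈ Finset.univ.filter (fun σ : Equiv.Perm (Fin n) => σ i = o), w σ = P i o

/-- The probability, under the distribution `w` over deterministic assignments, that agent `i`
envies agent `i'` (i.e. strictly prefers `i'`'s object to her own). -/
def envyProb (n : ℕ) (rank : Fin n → Equiv.Perm (Fin n)) (w : Equiv.Perm (Fin n) → ℝ)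
    (i i' : Fin n) : ℝ :=
  ∑ σ ∈ Finset.univ.filter (fun σ : Equiv.Perm (Fin n) => rank i (σ i') < rank i (σ i)), w σ

/-- In any decomposition of an SD-EF assignment matrix, the probability that a
fixed agent i envies a fixed agent i' is at most (n-1)/n. -/
theorem sdef_decomposition_envy_upper (n : ℕ) (hn : 2 ≤ n)
    (rank : Fin n → Equiv.Perm (Fin n)) (P : Fin n → Fin n → ℝ)
    (hds : DoublyStochastic n P) (hsdef : SDEF n rank P)
    (w : Equiv.Perm (Fin n) → ℝ) (hw : IsDecomposition n P w) (i i' : Fin n) :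
    envyProb n rank w i i' ≤ ((n : ℝ) - 1) / (n : ℝ) := by
  have hn0 : 0 < n := by omega
  obtain ⟨hPnn, hrow, hcol⟩ := hds
  obtain ⟨hwnn, hwsum, hmarg⟩ := hw
  set ostar : Fin n := (rank i).symm ⟨0, hn0⟩ with hostar
  have hrstar : rank i ostar = ⟨0, hn0⟩ := (rank i).apply_symm_apply _
  -- The filter at o = ostar is just {ostar}
  have hfilt : Finset.univ.filter (fun o' => rank i o' ≤ rank i ostar) = {ostar} := by
    ext o'
    simp only [Finset.mem_filter, Finset.mem_univ, true_and, Finset.mem_singleton, hrstar]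
    constructor
    · intro h
      have : rank i o' = ⟨0, hn0⟩ := le_antisymm h (Fin.mk_le_of_le_val (Nat.zero_le _))
      have := congrArg (rank i).symm this
      simpa using this
    · rintro rfl; simp [hrstar]
  -- SD-EF at ostar: P i' ostar ≤ P i ostar for every agent
  have hle : ∀ j : Fin n, P j ostar ≤ P i ostar := by
    intro j
    have := hsdef i j ostar
    rwa [hfilt, Finset.sum_singleton, Finset.sum_singleton] at this
  -- hence P i ostar ≥ 1/n
  have hcolstar : ∑ j, P j ostar = 1 := hcol ostar
  have hsum_le : (1 : ℝ) ≤ n * P i ostar := by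
    calc (1 : ℝ) = ∑ j, P j ostar := hcolstar.symm
    _ ≤ ∑ _j : Fin n, P i ostar := Finset.sum_le_sum fun j _ => hle j
    _ = n * P i ostar := by rw [Finset.sum_const, Finset.card_univ, Fintype.card_fin,
        nsmul_eq_mul]
  have hPstar : 1 / (n : ℝ) ≤ P i ostar := by
    rw [div_le_iff₀ (by positivity)]
    linarith [hsum_le]
  -- envy set is contained in {σ : σ i ≠ ostar}
  have hsubset : (Finset.univ.filter (fun σ : Equiv.Perm (Fin n) =>
      rank i (σ i') < rank i (σ i))) ⊆
      Finset.univ.filter (fun σ : Equiv.Perm (Fin n) => ¬ σ i = ostar) := by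
    intro σ hσ
    simp only [Finset.mem_filter, Finset.mem_univ, true_and] at hσ ⊢
    intro hσi
    rw [hσi, hrstar] at hσ
    exact absurd hσ (by simp [Fin.lt_def])
  have henvy_le : envyProb n rank w i i' ≤
      ∑ σ ∈ Finset.univ.filter (fun σ : Equiv.Perm (Fin n) => ¬ σ i = ostar), w σ :=
    Finset.sum_le_sum_of_subset_of_nonneg hsubset (fun σ _ _ => hwnn σ)
  have hsplit : ∑ σ ∈ Finset.univ.filter (fun σ : Equiv.Perm (Fin n) => σ i = ostar), w σ +
      ∑ σ ∈ Finset.univ.filter (fun σ : Equiv.Perm (Fin n) => ¬ σ i = ostar), w σ = 1 := by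
    rw [Finset.sum_filter_add_sum_filter_not]; exact hwsum
  have : ∑ σ ∈ Finset.univ.filter (fun σ : Equiv.Perm (Fin n) => ¬ σ i = ostar), w σ
      = 1 - P i ostar := by
    rw [← hmarg i ostar]; linarith [hsplit]
  rw [this] at henvy_le
  have hfin : (1 : ℝ) - P i ostar ≤ ((n : ℝ) - 1) / (n : ℝ) := by
    have hnpos : (0 : ℝ) < n := by positivity
    rw [sub_div, div_self (ne_of_gt hnpos)]
    linarith [hPstar]
  linarith
end

section
/- Let n ≥ 2 and let a_1, ..., a_n be reals with Σ_{j=1}^τ a_j ≥ (r/(r+s))·τ for all τ ∈ {1,...,n-1} and Σ_{j=1}^n a_j = (r/(r+s))·n, where r, s are positive integers with r + s = n. Then for every t ∈ {1,...,n}, Σ_{j=1}^t (a_j − a_{n−j+1}) ≥ 0. -/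
lemma rev_sum (a : ℕ → ℝ) (n t : ℕ) (ht : t ≤ n) :
    ∑ j ∈ Finset.Icc 1 t, a (n - j + 1) = ∑ j ∈ Finset.Icc (n - t + 1) n, a j := by
  apply Finset.sum_nbij' (fun j => n - j + 1) (fun j => n - j + 1)
  · intro j hj
    simp only [Finset.mem_Icc] at *
    omega
  · intro j hj
    simp only [Finset.mem_Icc] at *
    omega
  · intro j hj
    simp only [Finset.mem_Icc] at hj
    omega
  · intro j hj
    simp only [Finset.mem_Icc] at hj
    omega
  · intro j hj; rfl

/-- Claim 1 in the paper: if the prefix sums of a_1,...,a_n dominate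
(r/(r+s))·τ for τ = 1,...,n-1 and the total sum equals (r/(r+s))·n, then every partial sum
Σ_{j=1}^t (a_j - a_{n-j+1}) is nonnegative. -/
theorem prefix_sum_symmetry_nonneg (r s n : ℕ) (hr : 0 < r) (hs : 0 < s) (hn : n = r + s)
    (a : ℕ → ℝ)
    (hpref : ∀ τ : ℕ, 1 ≤ τ → τ ≤ n - 1 →
      ((r : ℝ) / ((r : ℝ) + (s : ℝ))) * τ ≤ ∑ j ∈ Finset.Icc 1 τ, a j)
    (htot : ∑ j ∈ Finset.Icc 1 n, a j = ((r : ℝ) / ((r : ℝ) + (s : ℝ))) * n) :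
    ∀ t : ℕ, 1 ≤ t → t ≤ n → 0 ≤ ∑ j ∈ Finset.Icc 1 t, (a j - a (n - j + 1)) := by
  intro t ht1 htn
  rw [Finset.sum_sub_distrib, rev_sum a n t htn]
  have hsplit : ∑ j ∈ Finset.Icc 1 (n - t), a j + ∑ j ∈ Finset.Icc (n - t + 1) n, a j
      = ∑ j ∈ Finset.Icc 1 n, a j := by
    rw [← Finset.sum_union]
    · congr 1
      ext j
      simp only [Finset.mem_union, Finset.mem_Icc]
      omega
    · rw [Finset.disjoint_left]
      intro j hj hj'
      simp only [Finset.mem_Icc] at hj hj'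
      omega
  rcases eq_or_lt_of_le htn with h | h
  · subst h
    simp only [Nat.sub_self] at hsplit ⊢
    have : Finset.Icc 1 0 = (∅ : Finset ℕ) := by decide
    rw [this, Finset.sum_empty, zero_add] at hsplit
    linarith
  · have h1 := hpref t ht1 (by omega)
    have h2 := hpref (n - t) (by omega) (by omega)
    have hc : ((n : ℝ) : ℝ) = (t : ℝ) + ((n - t : ℕ) : ℝ) := by
      push_cast [Nat.cast_sub htn]; ring
    have : ((r : ℝ) / ((r : ℝ) + (s : ℝ))) * n
        = ((r : ℝ) / ((r : ℝ) + (s : ℝ))) * t + ((r : ℝ) / ((r : ℝ) + (s : ℝ))) * ((n - t : ℕ) : ℝ) := by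
      rw [hc]; ring
    linarith [hsplit, htot]
end

section
/- If a 3×3 doubly stochastic matrix P satisfies SD-EF and its minimum entry occurs in a position (i, o) where o is agent i's most preferred object, then every entry of P equals 1/3. -/
/-- if a 3×3 doubly stochastic SD-EF matrix attains its minimum entry at a
position (i, o) where o is agent i's most preferred object, then every entry equals 1/3. -/
theorem min_entry_at_top_implies_uniform (rank : Fin 3 → Equiv.Perm (Fin 3))
    (P : Fin 3 → Fin 3 → ℝ) (hds : DoublyStochastic 3 P) (hsdef : SDEF 3 rank P)
    (i : Fin 3) (hmin : ∀ i' o : Fin 3, P i ((rank i).symm 0) ≤ P i' o) :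
    ∀ i' o : Fin 3, P i' o = 1 / 3 := by
  obtain ⟨hpos, hrow, hcol⟩ := hds
  set t : Fin 3 := (rank i).symm 0 with ht
  have hrt : rank i t = 0 := (rank i).apply_symm_apply 0
  -- SD-EF at the top object: P i' t ≤ P i t
  have key : ∀ i', P i' t ≤ P i t := by
    intro i'
    have h := hsdef i i' t
    have hfilter : Finset.univ.filter (fun o' => rank i o' ≤ rank i t) = {t} := by
      ext o'
      simp only [Finset.mem_filter, Finset.mem_univ, true_and, Finset.mem_singleton, hrt,
        Fin.le_zero_iff]
      constructor
      · intro h0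
        have := congrArg (rank i).symm h0
        simpa [ht] using this
      · intro h0; rw [h0, hrt]
    rw [hfilter] at h
    simpa using h
  -- P i t ≥ 1/3 from the column sum
  have hge : 1 / 3 ≤ P i t := by
    have h1 : ∑ i', P i' t = 1 := hcol t
    rw [Fin.sum_univ_three] at h1
    have h0 := key 0; have h1' := key 1; have h2 := key 2
    linarith
  -- P i t ≤ 1/3 from the row sum
  have hle : P i t ≤ 1 / 3 := by
    have h1 : ∑ o, P i o = 1 := hrow i
    rw [Fin.sum_univ_three] at h1
    have h0 := hmin i 0; have h1' := hmin i 1; have h2 := hmin i 2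
    linarith
  have hmin' : ∀ i' o : Fin 3, 1 / 3 ≤ P i' o := by
    intro i' o
    have := hmin i' o
    linarith
  intro i' o
  have h1 : ∑ o, P i' o = 1 := hrow i'
  rw [Fin.sum_univ_three] at h1
  have h0 := hmin' i' 0; have h1' := hmin' i' 1; have h2 := hmin' i' 2
  have e0 : P i' 0 = 1 / 3 := by linarith
  have e1 : P i' 1 = 1 / 3 := by linarith
  have e2 : P i' 2 = 1 / 3 := by linarith
  fin_cases o <;> [exact e0; exact e1; exact e2]
end

section
/- Let r, s ≥ 1, n = r + s, and let (a_S)_{S ∈ S_r} be nonnegative reals summing to 1 over r-element subsets S of {1,...,n}, with marginals a_j = Σ_{S ∋ j} a_S satisfying Σ_{j=1}^τ a_j ≥ (r/n)·τ for all τ < n and Σ_{j=1}^n a_j = r. Then Σ_{S ∈ S_r} a_S · (1/(rs)) · Σ_{j ∈ S} (j − pos(S,j)) ≤ 1/2, where pos(S,j) = |{j' ∈ S : j' ≤ j}|. -/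
open Finset

lemma sum_pos_card (S : Finset ℕ) :
    ∑ j ∈ S, ((S.filter (fun k => k ≤ j)).card : ℝ) = S.card * (S.card + 1) / 2 := by
  induction S using Finset.induction_on with
  | empty => simp
  | @insert a S ha IH =>
    have h1 : ((insert a S).filter (fun k => k ≤ a)).card
        = (S.filter (fun k => k ≤ a)).card + 1 := by
      rw [Finset.filter_insert, if_pos le_rfl,
        Finset.card_insert_of_notMem (by simp [ha])]
    have h2 : ∑ j ∈ S, (((insert a S).filter (fun k => k ≤ j)).card : ℝ)
        = (∑ j ∈ S, ((S.filter (fun k => k ≤ j)).card : ℝ))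
          + ((S.filter (fun j => a ≤ j)).card : ℝ) := by
      rw [← Finset.sum_boole, ← Finset.sum_add_distrib]
      refine Finset.sum_congr rfl fun j hj => ?_
      rw [Finset.filter_insert]
      by_cases haj : a ≤ j
      · rw [if_pos haj, if_pos haj, Finset.card_insert_of_notMem (by simp [ha])]
        push_cast; ring
      · rw [if_neg haj, if_neg haj]; ring
    have h3 : (S.filter (fun j => a ≤ j)).card + (S.filter (fun k => k ≤ a)).card
        = S.card := by
      have : S.filter (fun j => a ≤ j) = S.filter (fun j => ¬ j ≤ a) := by
        refine Finset.filter_congr fun j hj => ?_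
        have : j ≠ a := fun h => ha (h ▸ hj)
        constructor <;> intro h <;> omega
      rw [this, add_comm]
      exact Finset.card_filter_add_card_filter_not _
    rw [Finset.sum_insert ha, h1, h2, Finset.card_insert_of_notMem ha]
    have h3' : ((S.filter (fun j => a ≤ j)).card : ℝ)
        = (S.card : ℝ) - ((S.filter (fun k => k ≤ a)).card : ℝ) := by
      have := h3; push_cast [← this]; ring
    rw [IH, h3']
    push_cast
    ring

lemma gauss_Icc (m : ℕ) : ∑ τ ∈ Finset.Icc 1 m, (τ : ℝ) = m * (m + 1) / 2 := by
  induction m with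
  | zero => simp
  | succ k ih =>
    rw [Finset.sum_Icc_succ_top (by omega), ih]
    push_cast; ring

/-- with nonnegative weights a_S summing to 1 over r-element subsets S of
{1,...,n} (n = r + s), marginals b j = Σ_{S ∋ j} a_S satisfying the SD-EF prefix conditions
Σ_{j≤τ} b j ≥ (r/n)·τ for τ < n and Σ_{j≤n} b j = r, the expected envy
Σ_S a_S · (1/(rs)) · Σ_{j ∈ S} (j − pos(S,j)) is at most 1/2, where
pos(S,j) = |{j' ∈ S : j' ≤ j}|. -/
theorem two_type_expected_envy_le_half (r s n : ℕ) (hr : 1 ≤ r) (hs : 1 ≤ s)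
    (hn : n = r + s) (a : Finset ℕ → ℝ)
    (ha : ∀ S ∈ Finset.powersetCard r (Finset.Icc 1 n), 0 ≤ a S)
    (hsum : ∑ S ∈ Finset.powersetCard r (Finset.Icc 1 n), a S = 1)
    (b : ℕ → ℝ)
    (hb : ∀ j : ℕ, b j =
      ∑ S ∈ (Finset.powersetCard r (Finset.Icc 1 n)).filter (fun S => j ∈ S), a S)
    (hpref : ∀ τ : ℕ, 1 ≤ τ → τ < n → ((r : ℝ) / (n : ℝ)) * τ ≤ ∑ j ∈ Finset.Icc 1 τ, b j)
    (htot : ∑ j ∈ Finset.Icc 1 n, b j = (r : ℝ)) :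
    ∑ S ∈ Finset.powersetCard r (Finset.Icc 1 n),
      a S * ((1 / ((r : ℝ) * s)) *
        ∑ j ∈ S, ((j - (S.filter (fun j' => j' ≤ j)).card : ℕ) : ℝ)) ≤ 1 / 2 := by
  have hnpos : (0:ℝ) < n := by
    have : 1 ≤ n := by omega
    exact_mod_cast Nat.lt_of_lt_of_le Nat.zero_lt_one this
  have hrs : (0:ℝ) < (r:ℝ) * s := by
    have h1 : (0:ℝ) < r := by exact_mod_cast hr
    have h2 : (0:ℝ) < s := by exact_mod_cast hs
    positivity
  -- Step 1: rewrite the envy of each S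
  have key1 : ∀ S ∈ Finset.powersetCard r (Finset.Icc 1 n),
      ∑ j ∈ S, ((j - (S.filter (fun j' => j' ≤ j)).card : ℕ) : ℝ)
        = (∑ j ∈ S, (j:ℝ)) - r * (r + 1) / 2 := by
    intro S hS
    obtain ⟨hSsub, hScard⟩ := Finset.mem_powersetCard.mp hS
    have hpos_le : ∀ j ∈ S, (S.filter (fun j' => j' ≤ j)).card ≤ j := by
      intro j hj
      calc (S.filter (fun j' => j' ≤ j)).card
          ≤ (Finset.Icc 1 j).card := by
            apply Finset.card_le_card
            intro k hk
            rw [Finset.mem_filter] at hk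
            have := hSsub hk.1
            rw [Finset.mem_Icc] at this ⊢
            exact ⟨this.1, hk.2⟩
        _ = j := by rw [Nat.card_Icc]; omega
    have : ∀ j ∈ S, ((j - (S.filter (fun j' => j' ≤ j)).card : ℕ) : ℝ)
        = (j:ℝ) - ((S.filter (fun j' => j' ≤ j)).card : ℝ) := by
      intro j hj
      have := hpos_le j hj
      push_cast [Nat.cast_sub this]
      ring
    rw [Finset.sum_congr rfl this, Finset.sum_sub_distrib, sum_pos_card, hScard]
  -- Step 2: swap sums
  have key2 : ∑ S ∈ Finset.powersetCard r (Finset.Icc 1 n), a S * ∑ j ∈ S, (j:ℝ)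
      = ∑ j ∈ Finset.Icc 1 n, (j:ℝ) * b j := by
    have step : ∀ S ∈ Finset.powersetCard r (Finset.Icc 1 n),
        a S * ∑ j ∈ S, (j:ℝ)
          = ∑ j ∈ Finset.Icc 1 n, (if j ∈ S then a S * (j:ℝ) else 0) := by
      intro S hS
      obtain ⟨hSsub, -⟩ := Finset.mem_powersetCard.mp hS
      rw [← Finset.sum_filter, Finset.filter_mem_eq_inter,
        Finset.inter_eq_right.mpr hSsub, Finset.mul_sum]
    rw [Finset.sum_congr rfl step, Finset.sum_comm]
    refine Finset.sum_congr rfl fun j hj => ?_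
    rw [← Finset.sum_filter, hb j, mul_comm ((j:ℝ)) _, Finset.sum_mul]
  -- Step 3: Abel summation bound
  have key3 : ∑ j ∈ Finset.Icc 1 n, (j:ℝ) * b j ≤ r * (n + 1) / 2 := by
    have swap : ∑ j ∈ Finset.Icc 1 n, (j:ℝ) * b j
        = ∑ τ ∈ Finset.Icc 1 n, ∑ j ∈ Finset.Icc τ n, b j := by
      have e1 : ∀ j ∈ Finset.Icc 1 n, (j:ℝ) * b j = ∑ τ ∈ Finset.Icc 1 j, b j := by
        intro j hj
        have hj1 : j + 1 - 1 = j := by omega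
        rw [Finset.sum_const, Nat.card_Icc, hj1, nsmul_eq_mul]
      rw [Finset.sum_congr rfl e1]
      refine Finset.sum_comm' fun j τ => ?_
      simp only [Finset.mem_Icc]
      omega
    rw [swap]
    have bound : ∀ τ ∈ Finset.Icc 1 n,
        ∑ j ∈ Finset.Icc τ n, b j ≤ (r:ℝ) - (r:ℝ)/(n:ℝ) * ((τ:ℝ) - 1) := by
      intro τ hτ
      rw [Finset.mem_Icc] at hτ
      have hsplit : ∑ j ∈ Finset.Icc 1 (τ-1), b j + ∑ j ∈ Finset.Icc τ n, b j
          = (r:ℝ) := by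
        rw [← htot]
        have e1 : Finset.Icc 1 (τ-1) = Finset.Ico 1 τ := by
          rw [← Finset.Ico_add_one_right_eq_Icc]; congr 1; omega
        have e2 : Finset.Icc τ n = Finset.Ico τ (n+1) := by
          rw [Finset.Ico_add_one_right_eq_Icc]
        have e3 : Finset.Icc 1 n = Finset.Ico 1 (n+1) := by
          rw [Finset.Ico_add_one_right_eq_Icc]
        rw [e1, e2, e3]
        exact Finset.sum_Ico_consecutive _ (by omega) (by omega)
      have hlow : (r:ℝ)/(n:ℝ) * ((τ:ℝ) - 1) ≤ ∑ j ∈ Finset.Icc 1 (τ-1), b j := by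
        rcases Nat.eq_or_lt_of_le hτ.1 with h1 | h1
        · simp [← h1]
        · have h2 : 1 ≤ τ - 1 := by omega
          have h3 : τ - 1 < n := by omega
          have := hpref (τ-1) h2 h3
          have hc : ((τ - 1 : ℕ) : ℝ) = (τ:ℝ) - 1 := by
            push_cast [Nat.cast_sub (by omega : 1 ≤ τ)]; ring
          rw [hc] at this
          exact this
      linarith
    calc ∑ τ ∈ Finset.Icc 1 n, ∑ j ∈ Finset.Icc τ n, b j
        ≤ ∑ τ ∈ Finset.Icc 1 n, ((r:ℝ) - (r:ℝ)/(n:ℝ) * ((τ:ℝ) - 1)) :=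
          Finset.sum_le_sum bound
      _ = r * (n + 1) / 2 := by
          rw [Finset.sum_sub_distrib, Finset.sum_const, Nat.card_Icc]
          have e : ∑ τ ∈ Finset.Icc 1 n, (r:ℝ)/(n:ℝ) * ((τ:ℝ) - 1)
              = (r:ℝ)/(n:ℝ) * ((n * (n+1) / 2) - n) := by
            rw [← Finset.mul_sum, Finset.sum_sub_distrib, gauss_Icc,
              Finset.sum_const, Nat.card_Icc]
            simp
          rw [e]
          have : (n + 1 - 1 : ℕ) = n := by omega
          rw [this]
          field_simp
          ring
  -- Final computation
  set c : ℝ := 1 / ((r:ℝ) * s) with hc_def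
  have hc : 0 < c := by rw [hc_def]; positivity
  have e : ∀ S ∈ Finset.powersetCard r (Finset.Icc 1 n),
      a S * (c * ∑ j ∈ S, ((j - (S.filter (fun j' => j' ≤ j)).card : ℕ) : ℝ))
        = c * (a S * ∑ j ∈ S, (j:ℝ)) - (c * ((r:ℝ) * ((r:ℝ) + 1) / 2)) * a S := by
    intro S hS
    rw [key1 S hS]
    ring
  rw [Finset.sum_congr rfl e, Finset.sum_sub_distrib, ← Finset.mul_sum, ← Finset.mul_sum,
    key2, hsum, mul_one]
  have hfin : c * ((r:ℝ) * ((n:ℝ) + 1) / 2) - c * ((r:ℝ) * ((r:ℝ) + 1) / 2) = 1 / 2 := by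
    have h0 : ((r:ℝ) * s) ≠ 0 := ne_of_gt hrs
    rw [hc_def]
    subst hn
    push_cast
    field_simp
    ring
  have h2 := mul_le_mul_of_nonneg_left key3 hc.le
  linarith
end

section
/- There exists a 3×3 doubly stochastic matrix (for suitable strict preferences of three agents) that satisfies weak SD-envy-freeness but admits no decomposition into permutation matrices in which every agent envies every other agent with probability at most 1/2. Concretely, with preferences a≻_1 b≻_1 c, a≻_2 c≻_2 b, c≻_3 a≻_3 b, the matrix with rows (0,1,0), (0.9,0,0.1), (0.1,0,0.9) works. -/
/-- `SDdom n e X Y`: random allocation X stochastically dominates Y with respect to the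
preference with rank function `e` (smaller rank = more preferred). -/
def SDdom (n : ℕ) (e : Equiv.Perm (Fin n)) (X Y : Fin n → ℝ) : Prop :=
  ∀ o : Fin n, ∑ o' ∈ Finset.univ.filter (fun o' => e o' ≤ e o), Y o' ≤
    ∑ o' ∈ Finset.univ.filter (fun o' => e o' ≤ e o), X o'

/-- Weak SD-envy-freeness: for each pair of agents, either their rows coincide or the other
agent's row does not stochastically dominate one's own row w.r.t. one's own preference. -/
def WeakSDEF (n : ℕ) (rank : Fin n → Equiv.Perm (Fin n)) (P : Fin n → Fin n → ℝ) : Prop :=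
  ∀ i i' : Fin n, (∀ o, P i o = P i' o) ∨ ¬ SDdom n (rank i) (P i') (P i)

theorem weakSDEF_of_forall_ne_exists_lt {n : ℕ} {rank : Fin n → Equiv.Perm (Fin n)}
    {P : Fin n → Fin n → ℝ}
    (h : ∀ i i', i ≠ i' → ∃ o, ∑ o' ∈ Finset.univ.filter (fun o' => rank i o' ≤ rank i o), P i' o' <
      ∑ o' ∈ Finset.univ.filter (fun o' => rank i o' ≤ rank i o), P i o') :
    WeakSDEF n rank P := by
  intro i i'
  by_cases hii' : i = i'
  · exact .inl fun o => by rw [hii']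
  · obtain ⟨o, ho⟩ := h i i' hii'
    exact .inr fun hdom => (hdom o).not_gt ho

theorem IsDecomposition.le_envyProb_of_forall_rank_le {n : ℕ} {rank : Fin n → Equiv.Perm (Fin n)}
    {P : Fin n → Fin n → ℝ} {w : Equiv.Perm (Fin n) → ℝ} (hw : IsDecomposition n P w)
    {i i' o : Fin n} (hii' : i ≠ i') (hfav : ∀ o', rank i o ≤ rank i o') :
    P i' o ≤ envyProb n rank w i i' := by
  rw [← hw.2.2 i' o]
  refine Finset.sum_le_sum_of_subset_of_nonneg (fun σ hσ => ?_) (fun σ _ _ => hw.1 σ)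
  simp only [Finset.mem_filter, Finset.mem_univ, true_and] at hσ ⊢
  have hne : σ i ≠ o := hσ ▸ σ.injective.ne hii'
  rw [hσ]
  exact (hfav (σ i)).lt_of_ne ((rank i).injective.ne hne.symm)

/-- Example 2: with preferences a≻₁b≻₁c, a≻₂c≻₂b, c≻₃a≻₃b, the doubly
stochastic matrix with rows (0,1,0), (0.9,0,0.1), (0.1,0,0.9) satisfies weak SD-EF but
admits no decomposition in which every agent envies every other agent with probability at
most 1/2 (no Dec-EF decomposition). Hence there exists a weak SD-EF doubly stochastic
matrix that is not EF-decomposable. -/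
theorem weak_sdef_not_ef_decomposable :
    let rank : Fin 3 → Equiv.Perm (Fin 3) :=
      ![Equiv.refl (Fin 3), Equiv.swap 1 2, (Equiv.swap 0 1).trans (Equiv.swap 0 2)]
    let P : Fin 3 → Fin 3 → ℝ := ![![0, 1, 0], ![0.9, 0, 0.1], ![0.1, 0, 0.9]]
    DoublyStochastic 3 P ∧ WeakSDEF 3 rank P ∧
      ¬ ∃ w : Equiv.Perm (Fin 3) → ℝ, IsDecomposition 3 P w ∧
        ∀ i i' : Fin 3, i ≠ i' → envyProb 3 rank w i i' ≤ 1 / 2 := by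
  intro rank P
  refine ⟨⟨?_, ?_, ?_⟩, weakSDEF_of_forall_ne_exists_lt ?_, ?_⟩
  · intro i o
    fin_cases i <;> fin_cases o <;> norm_num [P]
  · intro i
    fin_cases i <;> norm_num [P, Fin.sum_univ_three, Matrix.cons_val_two]
  · intro o
    fin_cases o <;> norm_num [P, Fin.sum_univ_three, Matrix.cons_val_two]
  · intro i i' hii'
    simp only [Fin.exists_fin_succ, Fin.exists_fin_zero, Finset.sum_filter, Fin.sum_univ_three]
    fin_cases i <;> fin_cases i' <;> first
      | exact absurd rfl hii'
      | norm_num +decide [rank, P, Equiv.swap_apply_def, Matrix.cons_val_two]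
  · rintro ⟨w, hw, henvy⟩
    have h01 : P 1 0 ≤ envyProb 3 rank w 0 1 :=
      hw.le_envyProb_of_forall_rank_le (by decide) fun o' => by simp [rank]
    norm_num [P] at h01
    linarith [henvy 0 1 (by decide)]
end

section
/- There exists a probability distribution over deterministic assignments of 3 objects to 3 agents that satisfies decomposition envy-freeness (every agent envies every other agent with probability at most 1/2), yet whose induced assignment matrix violates weak SD-envy-freeness. Concretely, with preferences a≻_1 b≻_1 c, b≻_2 c≻_2 a, c≻_3 a≻_3 b, the distribution putting probability 1/2 each on assignments (1:a,2:b,3:c) and (1:c,2:a,3:b) works. -/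
/-!
In the identity assignment every agent receives her top object, so nobody envies anybody there;
envy can only occur in the other assignment, which has probability 1/2.
The induced rows of agents 1 and 2 are (½, 0, ½) and (½, ½, 0) over a ≻₁ b ≻₁ c: pairing agent 2's
objects a, b with agent 1's objects a, c shows that agent 2's row stochastically dominates agent 1's
with respect to ≻₁, although the two rows differ.
-/

section HalfMixture

variable {α : Type*} [DecidableEq α]

noncomputable def halfMix (a b : α) : α → ℝ := fun x =>
  if x = a then 1 / 2 else if x = b then 1 / 2 else 0

noncomputable def halfPoints (a b : α) : α → ℝ := fun x =>
  (if a = x then 1 / 2 else 0) + (if b = x then 1 / 2 else 0)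

lemma halfMix_nonneg (a b x : α) : 0 ≤ halfMix a b x := by
  unfold halfMix
  split_ifs <;> norm_num

lemma halfMix_eq_halfPoints {a b : α} (hab : a ≠ b) : halfMix a b = halfPoints a b := by
  funext x
  unfold halfMix halfPoints
  by_cases hxa : x = a
  · subst hxa
    simp [Ne.symm hab]
  · simp [hxa, Ne.symm hxa, eq_comm]

lemma halfPoints_comm (a b : α) : halfPoints a b = halfPoints b a := by
  funext x
  exact add_comm _ _

lemma sum_halfPoints (a b : α) (s : Finset α) :
    ∑ x ∈ s, halfPoints a b x = (if a ∈ s then 1 / 2 else 0) + (if b ∈ s then 1 / 2 else 0) := by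
  simp only [halfPoints, Finset.sum_add_distrib, Finset.sum_ite_eq]

lemma sum_halfMix [Fintype α] {a b : α} (hab : a ≠ b) : ∑ x, halfMix a b x = 1 := by
  rw [halfMix_eq_halfPoints hab, sum_halfPoints]
  norm_num

end HalfMixture

lemma ite_le_ite_of_imp {p q : Prop} [Decidable p] [Decidable q] {c : ℝ} (hc : 0 ≤ c)
    (hpq : p → q) : (if p then c else 0) ≤ if q then c else 0 := by
  split_ifs with hp hq
  exacts [le_rfl, absurd (hpq hp) hq, hc, le_rfl]

section Assignments

variable {n : ℕ}

lemma marginal_halfMix {σ τ : Equiv.Perm (Fin n)} (hστ : σ ≠ τ) (i : Fin n) :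
    (fun o => ∑ ρ ∈ Finset.univ.filter (fun ρ : Equiv.Perm (Fin n) => ρ i = o), halfMix σ τ ρ) =
      halfPoints (σ i) (τ i) := by
  funext o
  rw [halfMix_eq_halfPoints hστ, sum_halfPoints]
  simp only [Finset.mem_filter, Finset.mem_univ, true_and, halfPoints]

lemma envyProb_halfMix_le {rank : Fin n → Equiv.Perm (Fin n)} {σ τ : Equiv.Perm (Fin n)}
    (hστ : σ ≠ τ) {i i' : Fin n} (hσ : ¬ rank i (σ i') < rank i (σ i)) :
    envyProb n rank (halfMix σ τ) i i' ≤ 1 / 2 := by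
  rw [envyProb, halfMix_eq_halfPoints hστ, sum_halfPoints]
  simp only [Finset.mem_filter, Finset.mem_univ, true_and, hσ, if_false, zero_add]
  split_ifs <;> norm_num

lemma sdDom_halfPoints {e : Equiv.Perm (Fin n)} {x y x' y' : Fin n}
    (hx : e x' ≤ e x) (hy : e y' ≤ e y) :
    SDdom n e (halfPoints x' y') (halfPoints x y) := by
  intro o
  simp only [sum_halfPoints, Finset.mem_filter, Finset.mem_univ, true_and]
  exact add_le_add (ite_le_ite_of_imp (by norm_num) hx.trans)
    (ite_le_ite_of_imp (by norm_num) hy.trans)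

end Assignments

/-- Example 3: with preferences a≻₁b≻₁c, b≻₂c≻₂a, c≻₃a≻₃b, the distribution
putting probability 1/2 on each of the assignments (1:a,2:b,3:c) (the identity) and
(1:c,2:a,3:b) is a probability distribution satisfying Dec-EF (each agent envies each other
agent with probability at most 1/2), yet its induced assignment matrix violates weak SD-EF. -/
theorem dec_ef_not_weak_sdef :
    let rank : Fin 3 → Equiv.Perm (Fin 3) :=
      ![Equiv.refl (Fin 3), ((Equiv.swap 0 1).trans (Equiv.swap 0 2)).symm,
        (Equiv.swap 0 1).trans (Equiv.swap 0 2)]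
    let w : Equiv.Perm (Fin 3) → ℝ := fun σ =>
      if σ = Equiv.refl (Fin 3) then 1 / 2
      else if σ = ((Equiv.swap 0 1).trans (Equiv.swap 0 2)).symm then 1 / 2 else 0
    let P : Fin 3 → Fin 3 → ℝ := fun i o =>
      ∑ σ ∈ Finset.univ.filter (fun σ : Equiv.Perm (Fin 3) => σ i = o), w σ
    (∀ σ, 0 ≤ w σ) ∧ (∑ σ : Equiv.Perm (Fin 3), w σ = 1) ∧
      (∀ i i' : Fin 3, i ≠ i' → envyProb 3 rank w i i' ≤ 1 / 2) ∧
      ¬ WeakSDEF 3 rank P := by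
  intro rank w P
  have hστ : Equiv.refl (Fin 3) ≠ ((Equiv.swap 0 1).trans (Equiv.swap 0 2)).symm := by decide
  have hP : ∀ i, P i = halfPoints (Equiv.refl (Fin 3) i)
      (((Equiv.swap 0 1).trans (Equiv.swap 0 2)).symm i) := marginal_halfMix hστ
  have identity_envyFree :
      ∀ i i', ¬ rank i (Equiv.refl (Fin 3) i') < rank i (Equiv.refl (Fin 3) i) := by
    decide
  refine ⟨halfMix_nonneg _ _, sum_halfMix hστ,
    fun i i' _ => envyProb_halfMix_le hστ (identity_envyFree i i'), fun hWeak => ?_⟩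
  have hRow0 : P 0 = halfPoints 0 2 := by rw [hP]; rfl
  have hRow1 : P 1 = halfPoints 0 1 := by rw [hP, halfPoints_comm]; rfl
  rcases hWeak 0 1 with hEq | hNotDom
  · have h := hEq 1
    rw [hRow0, hRow1] at h
    norm_num [halfPoints, Fin.ext_iff] at h
  · rw [hRow0, hRow1] at hNotDom
    exact hNotDom (sdDom_halfPoints (by decide) (by decide))
end

section
/- Under the assignment matrix produced by Probabilistic Serial, each agent receives each object that is among the commonly-agreed top j−1 objects with probability exactly 1/n, and if not all agents agree on the j-th most preferred object, any fixed agent receives her j-th most preferred object with probability at least 1/(n−1). -/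
/-- One run of the Probabilistic Serial (simultaneous eating) algorithm, implemented with a
step counter (\`fuel\`). State: the set \`avail\` of not-yet-exhausted objects and the remaining
fraction \`x o\` of each object. In each step every agent eats her most preferred available
object at unit speed; the step lasts until some object is exhausted; the fractions eaten are
accumulated. The matrix entry (i, o) is the total amount of object o eaten by agent i. -/
noncomputable def psAux (n : ℕ) (rank : Fin n → Equiv.Perm (Fin n)) :
    ℕ → Finset (Fin n) → (Fin n → ℝ) → Fin n → Fin n → ℝ
  | 0, _, _ => fun _ _ => 0
  | fuel + 1, avail, x =>
    if h : avail.Nonempty then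
      let fav : Fin n → Fin n := fun i =>
        (rank i).symm ((avail.image (rank i)).min' (h.image _))
      let rate : Fin n → ℕ := fun o => (Finset.univ.filter fun i => fav i = o).card
      let cands := avail.filter fun o => 0 < rate o
      if hc : cands.Nonempty then
        let T : ℝ := (cands.image fun o => x o / (rate o : ℝ)).min' (hc.image _)
        let newx : Fin n → ℝ := fun o => x o - T * (rate o : ℝ)
        fun i o => (if fav i = o then T else 0) +
          psAux n rank fuel (avail.filter fun o' => 0 < newx o') newx i o
      else fun _ _ => 0
    else fun _ _ => 0

/-- The assignment matrix produced by Probabilistic Serial: run the eating algorithm from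
full objects; at most n steps occur since each step exhausts at least one object. -/
noncomputable def psMatrix (n : ℕ) (rank : Fin n → Equiv.Perm (Fin n)) :
    Fin n → Fin n → ℝ :=
  psAux n rank n Finset.univ fun _ => 1

/-!
During the first `(j - 1) / n` time units the agents eat the common top objects one after the
other, each shared by all `n` of them. Afterwards agent `i` eats her `j`-th object `o` until it
runs out. While some agent is not eating `o`, at most `n - 1` agents share it, so if `o` runs out
in that regime, `i` gets at least `1 / (n - 1)` of it. Otherwise an agent `i₀` who ranks `o` below
position `j` eventually joins, after exhausting one more object; eating that unit together with
`i`'s share of `o` at total rate `n` takes time `s` with `n * s ≥ 1 + s`, all of which `i` spends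
on `o`.
-/

namespace PS

variable {n : ℕ} (rank : Fin n → Equiv.Perm (Fin n))

lemma card_filter_le_apply (σ : Equiv.Perm (Fin n)) (k : ℕ) :
    (Finset.univ.filter fun o => k ≤ (σ o : ℕ)).card = n - k := by
  have hσ : (Finset.univ.filter fun o => k ≤ (σ o : ℕ)).card =
      (Finset.univ.filter fun r : Fin n => k ≤ (r : ℕ)).card :=
    Finset.card_equiv σ (by simp)
  have hlt := Fin.card_filter_val_lt (n := n) (m := k)
  have hsum := Finset.card_filter_add_card_filter_not (s := Finset.univ)
    (fun r : Fin n => (r : ℕ) < k)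
  simp only [not_lt, Finset.card_univ, Fintype.card_fin] at hsum
  omega

section Step

variable {avail : Finset (Fin n)} (h : avail.Nonempty)

noncomputable def favorite (i : Fin n) : Fin n :=
  (rank i).symm ((avail.image (rank i)).min' (h.image _))

noncomputable def eaters (o : Fin n) : ℕ :=
  (Finset.univ.filter fun i => favorite rank h i = o).card

noncomputable def eaten : Finset (Fin n) :=
  avail.filter fun o => 0 < eaters rank h o

lemma favorite_mem (i : Fin n) : favorite rank h i ∈ avail := by
  obtain ⟨a, ha, hae⟩ := Finset.mem_image.1 (Finset.min'_mem _ (h.image (rank i)))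
  rw [favorite, ← hae, Equiv.symm_apply_apply]
  exact ha

lemma rank_favorite_le (i : Fin n) {o : Fin n} (ho : o ∈ avail) :
    rank i (favorite rank h i) ≤ rank i o := by
  rw [favorite, Equiv.apply_symm_apply]
  exact Finset.min'_le _ _ (Finset.mem_image_of_mem _ ho)

lemma favorite_eq_of_forall_le {i o : Fin n} (ho : o ∈ avail)
    (hmin : ∀ o' ∈ avail, rank i o ≤ rank i o') : favorite rank h i = o :=
  (rank i).injective <|
    le_antisymm (rank_favorite_le rank h i ho) (hmin _ (favorite_mem rank h i))

lemma eaters_pos_of_favorite_eq {i o : Fin n} (hi : favorite rank h i = o) :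
    0 < eaters rank h o :=
  Finset.card_pos.2 ⟨i, Finset.mem_filter.2 ⟨Finset.mem_univ _, hi⟩⟩

lemma eaten_nonempty : (eaten rank h).Nonempty := by
  obtain ⟨o, -⟩ := id h
  exact ⟨favorite rank h o, Finset.mem_filter.2
    ⟨favorite_mem rank h o, eaters_pos_of_favorite_eq rank h rfl⟩⟩

lemma sum_eaters : ∑ o ∈ avail, eaters rank h o = n := by
  simpa [eaters] using (Finset.card_eq_sum_card_fiberwise (s := Finset.univ)
    fun i _ => favorite_mem rank h i).symm

lemma eaters_le_of_favorite_ne {i o : Fin n} (hi : favorite rank h i ≠ o) :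
    eaters rank h o ≤ n - 1 := by
  have hsub : Finset.univ.filter (fun i' => favorite rank h i' = o) ⊆ Finset.univ.erase i :=
    fun a ha => Finset.mem_erase.2
      ⟨fun hai => hi (hai ▸ (Finset.mem_filter.1 ha).2), Finset.mem_univ _⟩
  simpa [eaters] using Finset.card_le_card hsub

lemma eaters_of_forall_favorite_eq {o : Fin n} (hall : ∀ i, favorite rank h i = o)
    (o' : Fin n) : eaters rank h o' = if o = o' then n else 0 := by
  split_ifs with ho <;> simp [eaters, hall, ho]

noncomputable def duration (x : Fin n → ℝ) : ℝ :=
  ((eaten rank h).image fun o => x o / (eaters rank h o : ℝ)).min'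
    ((eaten_nonempty rank h).image _)

noncomputable def remaining (x : Fin n → ℝ) (o : Fin n) : ℝ :=
  x o - duration rank h x * eaters rank h o

noncomputable def nextAvail (x : Fin n → ℝ) : Finset (Fin n) :=
  avail.filter fun o => 0 < remaining rank h x o

variable {x : Fin n → ℝ}

lemma nextAvail_subset : nextAvail rank h x ⊆ avail :=
  Finset.filter_subset _ _

lemma duration_le {o : Fin n} (ho : o ∈ eaten rank h) :
    duration rank h x ≤ x o / eaters rank h o :=
  Finset.min'_le _ _ (Finset.mem_image_of_mem _ ho)

lemma exists_duration_eq : ∃ o ∈ eaten rank h, duration rank h x = x o / eaters rank h o := by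
  obtain ⟨o, ho, he⟩ := Finset.mem_image.1 (Finset.min'_mem _ ((eaten_nonempty rank h).image
    fun o => x o / (eaters rank h o : ℝ)))
  exact ⟨o, ho, he.symm⟩

lemma duration_nonneg (hx : ∀ o ∈ avail, 0 ≤ x o) : 0 ≤ duration rank h x := by
  obtain ⟨o, ho, he⟩ := exists_duration_eq rank h (x := x)
  rw [he]
  exact div_nonneg (hx o (Finset.mem_filter.1 ho).1) (Nat.cast_nonneg _)

lemma remaining_nonneg (hx : ∀ o ∈ avail, 0 ≤ x o) {o : Fin n} (ho : o ∈ avail) :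
    0 ≤ remaining rank h x o := by
  rw [remaining, sub_nonneg]
  rcases Nat.eq_zero_or_pos (eaters rank h o) with h0 | hpos
  · simpa [h0] using hx o ho
  · have hle := duration_le rank h (x := x) (Finset.mem_filter.2 ⟨ho, hpos⟩)
    rwa [le_div_iff₀ (by exact_mod_cast hpos)] at hle

lemma remaining_le (hx : ∀ o ∈ avail, 0 ≤ x o) (o : Fin n) : remaining rank h x o ≤ x o :=
  sub_le_self _ (mul_nonneg (duration_nonneg rank h hx) (Nat.cast_nonneg _))

lemma card_nextAvail_lt : (nextAvail rank h x).card < avail.card := by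
  obtain ⟨o, ho, he⟩ := exists_duration_eq rank h (x := x)
  obtain ⟨hoa, hpos⟩ := Finset.mem_filter.1 ho
  have hzero : remaining rank h x o = 0 := by
    rw [remaining, he, div_mul_cancel₀ _ (by exact_mod_cast hpos.ne'), sub_self]
  refine Finset.card_lt_card ⟨Finset.filter_subset _ _, fun hsub => ?_⟩
  simpa [hzero] using (Finset.mem_filter.1 (hsub hoa)).2

lemma sum_nextAvail_remaining (hx : ∀ o ∈ avail, 0 ≤ x o) :
    ∑ o ∈ nextAvail rank h x, remaining rank h x o =
      ∑ o ∈ avail, x o - duration rank h x * n := by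
  have hdrop : ∑ o ∈ nextAvail rank h x, remaining rank h x o =
      ∑ o ∈ avail, remaining rank h x o :=
    Finset.sum_filter_of_ne fun o ho hne =>
      lt_of_le_of_ne (remaining_nonneg rank h hx ho) (Ne.symm hne)
  rw [hdrop]
  simp only [remaining, Finset.sum_sub_distrib, ← Finset.mul_sum]
  rw [← Nat.cast_sum, sum_eaters]

end Step

variable {rank}

lemma psAux_succ {avail : Finset (Fin n)} (h : avail.Nonempty) (fuel : ℕ) (x : Fin n → ℝ)
    (i o : Fin n) :
    psAux n rank (fuel + 1) avail x i o =
      (if favorite rank h i = o then duration rank h x else 0) +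
        psAux n rank fuel (nextAvail rank h x) (remaining rank h x) i o := by
  rw [psAux, dif_pos h]
  split
  · rfl
  · exact absurd (eaten_nonempty rank h) ‹_›

lemma psAux_succ_of_empty (fuel : ℕ) (x : Fin n → ℝ) (i o : Fin n) :
    psAux n rank (fuel + 1) ∅ x i o = 0 := by
  rw [psAux, dif_neg Finset.not_nonempty_empty]

lemma psAux_nonneg (fuel : ℕ) {avail : Finset (Fin n)} {x : Fin n → ℝ}
    (hx : ∀ o ∈ avail, 0 ≤ x o) (i o : Fin n) : 0 ≤ psAux n rank fuel avail x i o := by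
  induction fuel generalizing avail x with
  | zero => rw [psAux]
  | succ fuel ih =>
    rcases avail.eq_empty_or_nonempty with rfl | h
    · rw [psAux_succ_of_empty]
    · rw [psAux_succ h]
      refine add_nonneg ?_ (ih fun o' ho' => (Finset.mem_filter.1 ho').2.le)
      split_ifs
      exacts [duration_nonneg rank h hx, le_rfl]

lemma psAux_eq_zero_of_notMem (fuel : ℕ) {avail : Finset (Fin n)} (x : Fin n → ℝ) {o : Fin n}
    (ho : o ∉ avail) (i : Fin n) : psAux n rank fuel avail x i o = 0 := by
  induction fuel generalizing avail x with
  | zero => rw [psAux]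
  | succ fuel ih =>
    rcases avail.eq_empty_or_nonempty with rfl | h
    · rw [psAux_succ_of_empty]
    · rw [psAux_succ h,
        if_neg fun (he : favorite rank h i = o) => ho (he ▸ favorite_mem rank h i),
        ih _ fun hmem => ho (nextAvail_subset rank h hmem), add_zero]

lemma psAux_succ_of_forall_favorite_eq {avail : Finset (Fin n)} (h : avail.Nonempty)
    {x : Fin n → ℝ} (hx : ∀ o ∈ avail, 0 < x o) {o : Fin n}
    (hall : ∀ i, favorite rank h i = o) (fuel : ℕ) (i o' : Fin n) :
    psAux n rank (fuel + 1) avail x i o' =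
      (if o' = o then x o / n else 0) +
        psAux n rank fuel (avail.erase o) (Function.update x o 0) i o' := by
  have hnpos : 0 < n := o.pos
  have hn : (n : ℝ) ≠ 0 := by positivity
  have heaten : eaten rank h = {o} := by
    ext a
    simp only [eaten, Finset.mem_filter, Finset.mem_singleton,
      eaters_of_forall_favorite_eq rank h hall]
    constructor
    · rintro ⟨-, hpos⟩
      by_contra hne
      simp [Ne.symm hne] at hpos
    · rintro rfl
      exact ⟨hall i ▸ favorite_mem rank h i, by simpa using hnpos⟩
  have hdur : duration rank h x = x o / n := by
    obtain ⟨a, ha, he⟩ := exists_duration_eq rank h (x := x)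
    rw [heaten, Finset.mem_singleton] at ha
    subst ha
    simpa [eaters_of_forall_favorite_eq rank h hall] using he
  have hrem : remaining rank h x = Function.update x o 0 := by
    funext a
    rcases eq_or_ne a o with rfl | hne
    · simp [remaining, hdur, eaters_of_forall_favorite_eq rank h hall, hn]
    · simp [remaining, eaters_of_forall_favorite_eq rank h hall, hne, hne.symm]
  have hnext : nextAvail rank h x = avail.erase o := by
    ext a
    rcases eq_or_ne a o with rfl | hne
    · simp [nextAvail, hrem]
    · simp only [nextAvail, hrem, Finset.mem_filter, Finset.mem_erase, hne,
        Function.update_of_ne hne, ne_eq, not_false_eq_true, true_and]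
      exact ⟨fun ha => ha.1, fun ha => ⟨ha, hx a ha⟩⟩
  simp only [psAux_succ h, hall, hdur, hnext, hrem, eq_comm]

variable (rank) in
def AgreeOnTop (k : ℕ) : Prop :=
  ∀ i i' o : Fin n, (rank i o : ℕ) < k → rank i' o = rank i o

lemma AgreeOnTop.mono {k k' : ℕ} (hk : AgreeOnTop rank k) (hk' : k' ≤ k) :
    AgreeOnTop rank k' :=
  fun i i' o ho => hk i i' o (ho.trans_le hk')

lemma AgreeOnTop.le_rank {k : ℕ} (hk : AgreeOnTop rank k) {i : Fin n} (i' : Fin n) {o : Fin n}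
    (ho : k ≤ (rank i o : ℕ)) : k ≤ (rank i' o : ℕ) := by
  by_contra! hlt
  have := hk i' i o hlt
  omega

theorem psMatrix_eq_of_agreeOnTop {k : ℕ} (hk : AgreeOnTop rank k) (hkn : k ≤ n) (i o : Fin n) :
    psMatrix n rank i o = (if (rank i o : ℕ) < k then 1 / (n : ℝ) else 0) +
      psAux n rank (n - k) (Finset.univ.filter fun o' => k ≤ (rank i o' : ℕ))
        (fun o' => if (rank i o' : ℕ) < k then 0 else 1) i o := by
  induction k with
  | zero => simp [psMatrix]
  | succ k ih =>
    set A := Finset.univ.filter fun o' => k ≤ (rank i o' : ℕ)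
    set ok := (rank i).symm ⟨k, hkn⟩
    have hrank_ok : rank i ok = ⟨k, hkn⟩ := (rank i).apply_symm_apply _
    have hok : ∀ {o'}, o' = ok ↔ (rank i o' : ℕ) = k := fun {o'} => by
      rw [eq_comm, Equiv.symm_apply_eq, Fin.ext_iff, Fin.val_mk, eq_comm]
    have hokA : ok ∈ A := by simp [A, ok]
    have hfav : ∀ i' : Fin n, favorite rank ⟨ok, hokA⟩ i' = ok := fun i' =>
      favorite_eq_of_forall_le rank _ hokA fun o' ho' => by
        rw [Fin.le_def, hk i i' ok (by simp [ok]), hrank_ok]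
        exact (hk.mono k.le_succ).le_rank i' (Finset.mem_filter.1 ho').2
    have hA : A.erase ok = Finset.univ.filter fun o' => k + 1 ≤ (rank i o' : ℕ) := by
      ext o'
      simp only [A, Finset.mem_erase, Finset.mem_filter, Finset.mem_univ, true_and, Ne, hok]
      omega
    have hx : Function.update (fun o' => if (rank i o' : ℕ) < k then (0 : ℝ) else 1) ok 0 =
        fun o' => if (rank i o' : ℕ) < k + 1 then 0 else 1 := by
      funext o'
      simp only [Function.update_apply, hok]
      split_ifs <;> first | rfl | omega
    have hxA : ∀ o' ∈ A, (0 : ℝ) < if (rank i o' : ℕ) < k then 0 else 1 := fun o' ho' => by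
      simp [not_lt.2 (Finset.mem_filter.1 ho').2]
    rw [ih (hk.mono k.le_succ) (k.le_succ.trans hkn), show n - k = n - (k + 1) + 1 by omega,
      psAux_succ_of_forall_favorite_eq _ hxA hfav, hA, hx]
    simp only [hok, hrank_ok, Fin.val_mk, lt_irrefl, if_false]
    split_ifs <;> first | (exfalso; omega) | ring

lemma min_div_le_add_min {a b t r m : ℝ} (ht : 0 ≤ t) (hrm : r ≤ m) (hm : 0 < m) :
    min (a / m) b ≤ t + min ((a - t * r) / m) (b - t) := by
  rw [← min_add_add_left, add_sub_cancel]
  refine min_le_min_right _ ?_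
  rw [div_le_iff₀ hm, add_mul, div_mul_cancel₀ _ hm.ne']
  nlinarith [mul_le_mul_of_nonneg_left hrm ht]

lemma sum_add_le_of_favorite_eq {avail : Finset (Fin n)} (h : avail.Nonempty)
    {x : Fin n → ℝ} (hle : ∀ o' ∈ avail, x o' ≤ 1) {i₀ o : Fin n} {j : ℕ}
    (hj : j ≤ (rank i₀ o : ℕ)) (hfav : favorite rank h i₀ = o) :
    ∑ o' ∈ avail, x o' + j + 1 - n ≤ x o := by
  have ho : o ∈ avail := hfav ▸ favorite_mem rank h i₀
  have hsub : avail ⊆ Finset.univ.filter fun o' => (rank i₀ o : ℕ) ≤ rank i₀ o' :=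
    fun o' ho' => Finset.mem_filter.2
      ⟨Finset.mem_univ _, hfav ▸ rank_favorite_le rank h i₀ ho'⟩
  have hcard := Finset.card_le_card hsub
  rw [card_filter_le_apply] at hcard
  have hrest : ((avail.erase o).card : ℝ) + j + 1 ≤ n := by
    rw [Finset.card_erase_of_mem ho]
    exact_mod_cast (by omega : avail.card - 1 + j + 1 ≤ n)
  have hsum_rest : ∑ o' ∈ avail.erase o, x o' ≤ (avail.erase o).card := by
    simpa using Finset.sum_le_card_nsmul (avail.erase o) x 1
      fun o' ho' => hle o' (Finset.mem_of_mem_erase ho')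
  rw [← Finset.add_sum_erase avail x ho]
  linarith

lemma min_le_psAux_succ_of_forall_favorite_eq {avail : Finset (Fin n)} (h : avail.Nonempty)
    {x : Fin n → ℝ} (hpos : ∀ o' ∈ avail, 0 < x o') (hle : ∀ o' ∈ avail, x o' ≤ 1)
    {i i₀ o : Fin n} {j : ℕ} (hj : j ≤ (rank i₀ o : ℕ))
    (hall : ∀ i', favorite rank h i' = o) (fuel : ℕ) :
    min (x o / ((n : ℝ) - 1)) ((∑ o' ∈ avail, x o' + j + 1 - n) / n) ≤
      psAux n rank (fuel + 1) avail x i o := by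
  have hn : (0 : ℝ) < n := by have := o.pos; positivity
  have hrest : ∀ o' ∈ avail.erase o, 0 ≤ Function.update x o 0 o' := fun o' ho' => by
    rw [Function.update_of_ne (Finset.ne_of_mem_erase ho')]
    exact (hpos o' (Finset.mem_of_mem_erase ho')).le
  rw [psAux_succ_of_forall_favorite_eq h hpos hall, if_pos rfl]
  calc _ ≤ (∑ o' ∈ avail, x o' + j + 1 - n) / n := min_le_right _ _
    _ ≤ x o / n := by gcongr; exact sum_add_le_of_favorite_eq h hle hj (hall i₀)
    _ ≤ _ := le_add_of_nonneg_right (psAux_nonneg _ hrest _ _)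

/-- While agent `i` eats `o`, the left side is a lower bound for her final share of `o`:
a step in which at most `n - 1` agents eat `o` lowers both terms of the `min` by at most
its duration, and once every agent eats `o`, the agent `i₀` has exhausted at least `j`
objects, which bounds the remaining mass. -/
theorem min_le_psAux {i i₀ o : Fin n} {j : ℕ} (hj : j ≤ (rank i₀ o : ℕ)) (fuel : ℕ)
    {avail : Finset (Fin n)} {x : Fin n → ℝ} (hfuel : avail.card ≤ fuel)
    (hpos : ∀ o' ∈ avail, 0 < x o') (hle : ∀ o' ∈ avail, x o' ≤ 1) (ho : o ∈ avail)
    (hmin : ∀ o' ∈ avail, rank i o ≤ rank i o') :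
    min (x o / ((n : ℝ) - 1)) ((∑ o' ∈ avail, x o' + j + 1 - n) / n) ≤
      psAux n rank fuel avail x i o := by
  induction fuel generalizing avail x with
  | zero => simp [Finset.card_eq_zero.1 (Nat.le_zero.1 hfuel)] at ho
  | succ fuel ih =>
    have h : avail.Nonempty := ⟨o, ho⟩
    by_cases hall : ∀ i', favorite rank h i' = o
    · exact min_le_psAux_succ_of_forall_favorite_eq h hpos hle hj hall fuel
    obtain ⟨i', hi'⟩ := not_forall.1 hall
    have hx : ∀ o' ∈ avail, 0 ≤ x o' := fun o' ho' => (hpos o' ho').le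
    have hn : (0 : ℝ) < n := by have := o.pos; positivity
    have hfav : favorite rank h i = o := favorite_eq_of_forall_le rank h ho hmin
    have heaters_pos := eaters_pos_of_favorite_eq rank h hfav
    have heaters : (eaters rank h o : ℝ) ≤ n - 1 := by
      have := eaters_le_of_favorite_ne rank h hi'
      rw [le_sub_iff_add_le]
      exact_mod_cast (by omega : eaters rank h o + 1 ≤ n)
    have hn1 : (0 : ℝ) < n - 1 := lt_of_lt_of_le (by exact_mod_cast heaters_pos) heaters
    have hnext : min (remaining rank h x o / ((n : ℝ) - 1))
        ((∑ o' ∈ nextAvail rank h x, remaining rank h x o' + j + 1 - n) / n) ≤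
        psAux n rank fuel (nextAvail rank h x) (remaining rank h x) i o := by
      by_cases ho' : o ∈ nextAvail rank h x
      · exact ih (Nat.le_of_lt_succ ((card_nextAvail_lt rank h).trans_le hfuel))
          (fun o' ho' => (Finset.mem_filter.1 ho').2)
          (fun o' ho' => (remaining_le rank h hx o').trans (hle o' (nextAvail_subset rank h ho')))
          ho' (fun o' ho' => hmin o' (nextAvail_subset rank h ho'))
      · have hzero : remaining rank h x o = 0 :=
          le_antisymm (not_lt.1 fun hlt => ho' (Finset.mem_filter.2 ⟨ho, hlt⟩))
            (remaining_nonneg rank h hx ho)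
        rw [hzero, zero_div]
        exact (min_le_left _ _).trans
          (psAux_nonneg _ (fun o' ho' => (Finset.mem_filter.1 ho').2.le) _ _)
    have hmass : (∑ o' ∈ avail, x o' - duration rank h x * n + j + 1 - n) / n =
        (∑ o' ∈ avail, x o' + j + 1 - n) / n - duration rank h x := by
      field_simp
      ring
    rw [sum_nextAvail_remaining rank h hx, hmass] at hnext
    rw [psAux_succ h, if_pos hfav]
    exact (min_div_le_add_min (duration_nonneg rank h hx) heaters hn1).trans
      (add_le_add_right hnext _)

theorem min_le_psMatrix_of_agreeOnTop {k : ℕ} (hk : AgreeOnTop rank k) (hkn : k < n)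
    {i i₀ o : Fin n} (hio : (rank i o : ℕ) = k) (hi₀ : (rank i₀ o : ℕ) ≠ k) :
    min (1 / ((n : ℝ) - 1)) (2 / n) ≤ psMatrix n rank i o := by
  set A := Finset.univ.filter fun o' => k ≤ (rank i o' : ℕ)
  set x : Fin n → ℝ := fun o' => if (rank i o' : ℕ) < k then 0 else 1
  have hxA : ∀ o' ∈ A, x o' = 1 := fun o' ho' => if_neg (not_lt.2 (Finset.mem_filter.1 ho').2)
  have hcard : A.card = n - k := card_filter_le_apply (rank i) k
  have hsum : ∑ o' ∈ A, x o' = n - k := by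
    rw [Finset.sum_congr rfl hxA, Finset.sum_const, hcard, nsmul_one, Nat.cast_sub hkn.le]
  have hoA : o ∈ A := Finset.mem_filter.2 ⟨Finset.mem_univ _, hio.ge⟩
  have hbound := min_le_psAux (i := i) (lt_of_le_of_ne (hk.le_rank i₀ hio.ge) (Ne.symm hi₀))
    (n - k) hcard.le (fun o' ho' => (hxA o' ho').symm ▸ one_pos)
    (fun o' ho' => (hxA o' ho').le) hoA
    (fun o' ho' => by rw [Fin.le_def, hio]; exact (Finset.mem_filter.1 ho').2)
  rw [hxA o hoA, hsum] at hbound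
  rw [psMatrix_eq_of_agreeOnTop hk hkn.le, if_neg hio.not_lt, zero_add]
  convert hbound using 3
  push_cast
  ring

end PS

/-- suppose all agents agree on their top j−1 objects (every object of rank
< j−1 for one agent has the same rank for all agents), but no object is ranked j-th (rank
j−1) by all agents. Then under the PS matrix each agent receives each of the commonly-agreed
top j−1 objects with probability exactly 1/n, and each agent receives her own j-th most
preferred object with probability at least 1/(n−1). -/
theorem ps_matrix_top_probabilities (n : ℕ) (hn : 2 ≤ n)
    (rank : Fin n → Equiv.Perm (Fin n)) (j : ℕ) (hj : 1 ≤ j) (hjn : j ≤ n)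
    (hagree : ∀ i i' o : Fin n, (rank i o : ℕ) < j - 1 → rank i' o = rank i o)
    (hdisagree : ¬ ∃ o : Fin n, ∀ i : Fin n, (rank i o : ℕ) = j - 1) :
    (∀ i o : Fin n, (rank i o : ℕ) < j - 1 → psMatrix n rank i o = 1 / (n : ℝ)) ∧
    (∀ i : Fin n, 1 / ((n : ℝ) - 1) ≤ psMatrix n rank i ((rank i).symm ⟨j - 1, by omega⟩)) := by
  refine ⟨fun i o ho => ?_, fun i => ?_⟩
  · rw [PS.psMatrix_eq_of_agreeOnTop hagree (by omega), if_pos ho,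
      PS.psAux_eq_zero_of_notMem _ _
        fun hmem => (Finset.mem_filter.1 hmem).2.not_gt ho, add_zero]
  · set o := (rank i).symm ⟨j - 1, by omega⟩
    obtain ⟨i₀, hi₀⟩ := not_forall.1 (not_exists.1 hdisagree o)
    have hmin := PS.min_le_psMatrix_of_agreeOnTop (k := j - 1) (i := i) hagree (by omega)
      (by simp [o]) hi₀
    have hn' : (2 : ℝ) ≤ n := by exact_mod_cast hn
    rwa [min_eq_left ((div_le_div_iff₀ (by linarith) (by linarith)).2 (by linarith))] at hmin
end

section
/- The assignment matrix with rows (1/3, 5/12, 0, 1/4), (1/3, 5/12, 0, 1/4), (1/3, 1/12, 1/3, 1/4), (0, 1/12, 2/3, 1/4) (rows = agents 1–4, columns = objects a,b,c,d, preferences a≻_1 b≻_1 c≻_1 d, a≻_2 b≻_2 c≻_2 d, a≻_3 c≻_3 b≻_3 d, c≻_4 a≻_4 b≻_4 d) cannot be implemented by any reversal-symmetric probability distribution over serial dictatorships: there is no assignment of probabilities to the 24 agent permutations, equal on each permutation and its reverse, whose induced mixture of serial-dictatorship outcomes equals this matrix. -/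
/-- `A` is the serial-dictatorship outcome for picking order `pos` (agent i picks in
position `pos i`): it is a bijection from agents to objects, and each agent's object is
weakly preferred by her (w.r.t. her rank function) to every object not taken by agents
picking earlier. -/
def IsSerialDict (n : ℕ) (rank : Fin n → Equiv.Perm (Fin n)) (pos : Equiv.Perm (Fin n))
    (A : Fin n → Fin n) : Prop :=
  Function.Bijective A ∧
    ∀ i o : Fin n, (∀ i'', pos i'' < pos i → A i'' ≠ o) → rank i (A i) ≤ rank i o

def myrank : Fin 4 → Equiv.Perm (Fin 4) :=
  ![Equiv.refl (Fin 4), Equiv.refl (Fin 4), Equiv.swap 1 2,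
    (Equiv.swap 0 1).trans (Equiv.swap 0 2)]

def best (r : Equiv.Perm (Fin 4)) (s : Finset (Fin 4)) : Fin 4 :=
  r.symm (((s.image r).min).getD 0)

def SD (σ : Equiv.Perm (Fin 4)) : Fin 4 → Fin 4 := fun i =>
  let o0 := best (myrank (σ.symm 0)) Finset.univ
  let o1 := best (myrank (σ.symm 1)) (Finset.univ \ {o0})
  let o2 := best (myrank (σ.symm 2)) (Finset.univ \ {o0, o1})
  let o3 := best (myrank (σ.symm 3)) (Finset.univ \ {o0, o1, o2})
  ![o0, o1, o2, o3] (σ i)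

lemma SD_isSD : ∀ σ : Equiv.Perm (Fin 4), IsSerialDict 4 myrank σ (SD σ) := by
  unfold IsSerialDict
  decide

lemma keyK : ∀ σ : Equiv.Perm (Fin 4),
    (SD σ 2 = 0 ∨ SD σ 2 = 1) ↔
      ¬(SD (σ.trans Fin.revPerm) 2 = 0 ∨ SD (σ.trans Fin.revPerm) 2 = 1) := by decide

lemma sd_uniq (n : ℕ) (rank : Fin n → Equiv.Perm (Fin n)) (pos : Equiv.Perm (Fin n))
    (A B : Fin n → Fin n) (hA : IsSerialDict n rank pos A) (hB : IsSerialDict n rank pos B) :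
    A = B := by
  suffices H : ∀ k : ℕ, ∀ i, (pos i : ℕ) = k → A i = B i from funext fun i => H _ i rfl
  intro k
  induction k using Nat.strong_induction_on with
  | _ k ih =>
    intro i hk
    have h1 : ∀ i'', pos i'' < pos i → A i'' ≠ B i := by
      intro j hj hne
      have hABj : A j = B j := ih (pos j) (hk ▸ hj) j rfl
      have : j = i := hB.1.1 (hABj ▸ hne)
      exact absurd hj (by simp [this])
    have h2 : ∀ i'', pos i'' < pos i → B i'' ≠ A i := by
      intro j hj hne
      have hABj : A j = B j := ih (pos j) (hk ▸ hj) j rfl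
      have : j = i := hA.1.1 (hABj ▸ hne)
      exact absurd hj (by simp [this])
    exact (rank i).injective (le_antisymm (hA.2 i (B i) h1) (hB.2 i (A i) h2))

/-- Example 4: with preferences a≻₁b≻₁c≻₁d, a≻₂b≻₂c≻₂d, a≻₃c≻₃b≻₃d,
c≻₄a≻₄b≻₄d, the assignment matrix with rows (1/3, 5/12, 0, 1/4), (1/3, 5/12, 0, 1/4),
(1/3, 1/12, 1/3, 1/4), (0, 1/12, 2/3, 1/4) cannot be implemented by any reversal-symmetric
probability distribution over serial dictatorships: there is no probability assignment `p`
on the 24 picking orders, giving each order the same probability as its reverse, whose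
mixture of serial-dictatorship outcomes has marginals equal to this matrix. -/
theorem no_reversal_symmetric_implementation :
    let rank : Fin 4 → Equiv.Perm (Fin 4) :=
      ![Equiv.refl (Fin 4), Equiv.refl (Fin 4), Equiv.swap 1 2,
        (Equiv.swap 0 1).trans (Equiv.swap 0 2)]
    let P : Fin 4 → Fin 4 → ℝ :=
      ![![1/3, 5/12, 0, 1/4], ![1/3, 5/12, 0, 1/4],
        ![1/3, 1/12, 1/3, 1/4], ![0, 1/12, 2/3, 1/4]]
    ¬ ∃ (p : Equiv.Perm (Fin 4) → ℝ) (A : Equiv.Perm (Fin 4) → Fin 4 → Fin 4),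
      (∀ σ, 0 ≤ p σ) ∧ (∑ σ : Equiv.Perm (Fin 4), p σ = 1) ∧
      (∀ σ : Equiv.Perm (Fin 4), p (σ.trans Fin.revPerm) = p σ) ∧
      (∀ σ : Equiv.Perm (Fin 4), IsSerialDict 4 rank σ (A σ)) ∧
      (∀ i o : Fin 4,
        ∑ σ ∈ Finset.univ.filter (fun σ : Equiv.Perm (Fin 4) => A σ i = o), p σ = P i o) := by
  intro rank P
  rintro ⟨p, A, hpos, hsum, hrev, hsd, hmarg⟩
  have hA : ∀ σ, A σ = SD σ :=
    fun σ => sd_uniq 4 myrank σ (A σ) (SD σ) (hsd σ) (SD_isSD σ)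
  have h20 := hmarg 2 0
  have h21 := hmarg 2 1
  have hP20 : P 2 0 = 1/3 := rfl
  have hP21 : P 2 1 = 1/12 := rfl
  rw [hP20] at h20
  rw [hP21] at h21
  have hdis : Disjoint (Finset.univ.filter (fun σ : Equiv.Perm (Fin 4) => A σ 2 = 0))
      (Finset.univ.filter (fun σ : Equiv.Perm (Fin 4) => A σ 2 = 1)) := by
    rw [Finset.disjoint_left]
    intro σ hx hy
    simp only [Finset.mem_filter] at hx hy
    rw [hx.2] at hy
    exact absurd hy.2 (by decide)
  have hU : ∑ σ ∈ Finset.univ.filter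
      (fun σ : Equiv.Perm (Fin 4) => A σ 2 = 0 ∨ A σ 2 = 1), p σ = 1/3 + 1/12 := by
    rw [Finset.filter_or, Finset.sum_union hdis, h20, h21]
  have hsplit := Finset.sum_filter_add_sum_filter_not Finset.univ
      (fun σ : Equiv.Perm (Fin 4) => A σ 2 = 0 ∨ A σ 2 = 1) p
  rw [hsum] at hsplit
  have hsym : ∑ σ ∈ Finset.univ.filter
      (fun σ : Equiv.Perm (Fin 4) => ¬(A σ 2 = 0 ∨ A σ 2 = 1)), p σ
      = ∑ σ ∈ Finset.univ.filter
      (fun σ : Equiv.Perm (Fin 4) => A σ 2 = 0 ∨ A σ 2 = 1), p σ := by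
    apply Finset.sum_nbij' (i := fun σ => σ.trans Fin.revPerm)
      (j := fun σ => σ.trans Fin.revPerm)
    · intro σ hσ
      simp only [Finset.mem_filter, Finset.mem_univ, true_and] at hσ ⊢
      rw [hA σ] at hσ
      rw [hA]
      by_contra h
      exact hσ ((keyK σ).mpr h)
    · intro σ hσ
      simp only [Finset.mem_filter, Finset.mem_univ, true_and] at hσ ⊢
      rw [hA σ] at hσ
      rw [hA]
      exact (keyK σ).mp hσ
    · intro σ _
      exact Equiv.ext fun x => by simp [Fin.rev_rev]
    · intro σ _
      exact Equiv.ext fun x => by simp [Fin.rev_rev]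
    · intro σ _
      exact (hrev σ).symm
  rw [hsym, hU] at hsplit
  norm_num at hsplit
end
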